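/- Let A be a C*-algebra and φ a positive tracial linear functional on A. Then φ vanishes on every element a ∈ A with a² = 0, and more generally on every nilpotent element. -/

import Mathlib

/-!
Let `‖a‖ ≤ 1` and `c = a ^ (m + 1)`. With `r = (c c⋆ + δ²)⁻¹` from the functional calculus,
`s = δ² r` and `y = c⋆ r` give `1 = s + c y` with `‖s‖ ≤ 1`, `‖s c‖ ≤ δ` and `‖y‖ ≤ δ⁻¹`: the
C⋆-identity turns `‖r c‖²` into `‖r c c⋆ r‖ = sup t / (t + δ²)²`. By the trace property
`φ (c y a) = φ (y a ^ (m + 2))`, so `φ a` is close to `φ (s a)` once `a ^ (m + 2)` is small, and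
`(s a) ^ (m + 1) = s (a s) ^ m a` is then close to `s a ^ (m + 1)`, which is small. Induction on
the exponent shows that `φ a → 0` as a fixed power of `a` tends to `0` in the unit ball; a
nilpotent element, rescaled into the unit ball, therefore lies in the kernel of `φ`.
-/

open scoped ComplexOrder

theorem norm_pow_sub_pow_le {R : Type*} [SeminormedRing R] {x y : R} (hx : ‖x‖ ≤ 1)
    (hy : ‖y‖ ≤ 1) (m : ℕ) : ‖x ^ m - y ^ m‖ ≤ m * ‖x - y‖ := by
  induction m with
  | zero => simp
  | succ m ih =>
    have hy_pow : ‖(x - y) * y ^ m‖ ≤ ‖x - y‖ := by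
      rcases m.eq_zero_or_pos with rfl | hm
      · simp
      · calc ‖(x - y) * y ^ m‖ ≤ ‖x - y‖ * ‖y‖ ^ m :=
              (norm_mul_le _ _).trans (by gcongr; exact norm_pow_le' y hm)
          _ ≤ ‖x - y‖ := mul_le_of_le_one_right (norm_nonneg _) (pow_le_one₀ (norm_nonneg _) hy)
    calc ‖x ^ (m + 1) - y ^ (m + 1)‖ = ‖x * (x ^ m - y ^ m) + (x - y) * y ^ m‖ := by
          rw [pow_succ', pow_succ']; noncomm_ring
      _ ≤ ‖x‖ * ‖x ^ m - y ^ m‖ + ‖x - y‖ :=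
          (norm_add_le _ _).trans (add_le_add (norm_mul_le _ _) hy_pow)
      _ ≤ 1 * (m * ‖x - y‖) + ‖x - y‖ := by gcongr
      _ = (m + 1 : ℕ) * ‖x - y‖ := by push_cast; ring

theorem mul_div_add_one_le {a c : ℝ} (ha : 0 ≤ a) (hc : 0 ≤ c) : a * (c / (a + 1)) ≤ c := by
  rw [mul_div_left_comm]
  exact mul_le_of_le_one_right hc ((div_le_one (by positivity)).2 (by linarith))

def IsTracial {R M : Type*} [Mul R] (f : R → M) : Prop :=
  ∀ a b : R, f (a * b) = f (b * a)

section CStarAlgebra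

variable {A : Type*} [CStarAlgebra A] [PartialOrder A] [StarOrderedRing A]

theorem exists_add_mul_eq_one_norm_mul_le (c : A) {δ : ℝ} (hδ : 0 < δ) :
    ∃ s y : A, s + c * y = 1 ∧ ‖s‖ ≤ 1 ∧ ‖s * c‖ ≤ δ ∧ ‖y‖ ≤ δ⁻¹ := by
  set q := c * star c
  have hq_spec : ∀ t ∈ spectrum ℝ q, 0 ≤ t :=
    fun t ht => spectrum_nonneg_of_nonneg (mul_star_self_nonneg c) ht
  set g : ℝ → ℝ := fun t => (t + δ ^ 2)⁻¹
  have hg : ContinuousOn g (spectrum ℝ q) :=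
    (continuousOn_id.add continuousOn_const).inv₀ fun t ht =>
      (add_pos_of_nonneg_of_pos (hq_spec t ht) (pow_pos hδ 2)).ne'
  set r := cfc g q
  have hr : star r = r := (cfc_predicate g q).star_eq
  have hrc : ‖r * c‖ ≤ δ⁻¹ := by
    have hrqr : r * c * star (r * c) = cfc (fun t => g t * t * g t) q := by
      rw [cfc_mul (fun t => g t * t) g q (hg.mul continuousOn_id) hg,
        cfc_mul g (fun t => t) q hg continuousOn_id, cfc_id' ℝ q, star_mul, hr]
      simp only [q, r, mul_assoc]
    have hsq : ‖r * c‖ ^ 2 ≤ δ⁻¹ ^ 2 := by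
      rw [sq, ← CStarRing.norm_self_mul_star, hrqr]
      refine norm_cfc_le (by positivity) fun t ht => ?_
      have ht := hq_spec t ht
      have hpos : 0 < t + δ ^ 2 := add_pos_of_nonneg_of_pos ht (pow_pos hδ 2)
      have hgt : 0 < g t := inv_pos.2 hpos
      rw [Real.norm_of_nonneg (by positivity)]
      calc g t * t * g t ≤ g t * (t + δ ^ 2) * g t := by
            gcongr; exact le_add_of_nonneg_right (sq_nonneg δ)
        _ = g t := by rw [show g t * (t + δ ^ 2) = 1 from inv_mul_cancel₀ hpos.ne', one_mul]
        _ ≤ δ⁻¹ ^ 2 := by rw [inv_pow]; exact inv_anti₀ (by positivity) (by linarith)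
    exact (pow_le_pow_iff_left₀ (norm_nonneg _) (by positivity) two_ne_zero).1 hsq
  refine ⟨δ ^ 2 • r, star c * r, ?_, ?_, ?_, ?_⟩
  · calc δ ^ 2 • r + c * (star c * r) = cfc (fun t => δ ^ 2 * g t + t * g t) q := by
          rw [cfc_add q (fun t => δ ^ 2 * g t) (fun t => t * g t) (continuousOn_const.mul hg)
            (continuousOn_id.mul hg), cfc_const_mul _ _ q hg,
            cfc_mul (fun t => t) g q continuousOn_id hg, cfc_id' ℝ q]
          simp only [q, r, mul_assoc]
      _ = cfc (fun _ => 1) q := cfc_congr fun t ht => by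
          have hpos : 0 < t + δ ^ 2 := add_pos_of_nonneg_of_pos (hq_spec t ht) (pow_pos hδ 2)
          simp only [g]
          field_simp
          ring
      _ = 1 := cfc_const_one ℝ q
  · rw [← cfc_const_mul _ _ q hg]
    refine norm_cfc_le zero_le_one fun t ht => ?_
    have hpos : 0 < t + δ ^ 2 := add_pos_of_nonneg_of_pos (hq_spec t ht) (pow_pos hδ 2)
    rw [Real.norm_of_nonneg (by positivity), ← div_eq_mul_inv, div_le_one hpos]
    linarith [hq_spec t ht]
  · rw [smul_mul_assoc, norm_smul, Real.norm_of_nonneg (by positivity)]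
    calc δ ^ 2 * ‖r * c‖ ≤ δ ^ 2 * δ⁻¹ := by gcongr
      _ = δ := by field_simp
  · rwa [← hr, ← star_mul, norm_star]

variable {φ : A →L[ℂ] ℂ}

theorem IsTracial.exists_norm_map_sub_le (htr : IsTracial φ) {a : A} (ha : ‖a‖ ≤ 1) (m : ℕ)
    {δ : ℝ} (hδ : 0 < δ) :
    ∃ x : A, ‖x‖ ≤ 1 ∧ ‖x ^ (m + 1)‖ ≤ δ + m * (‖a ^ (m + 2)‖ / δ) ∧
      ‖φ a - φ x‖ ≤ ‖φ‖ * (‖a ^ (m + 2)‖ / δ) := by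
  obtain ⟨s, y, hsy, hs, hsc, hy⟩ := exists_add_mul_eq_one_norm_mul_le (a ^ (m + 1)) hδ
  have hs_eq : s = 1 - a ^ (m + 1) * y := eq_sub_of_add_eq hsy
  have hsmall {z : A} (hz : ‖z‖ ≤ ‖y‖ * ‖a ^ (m + 2)‖) : ‖z‖ ≤ ‖a ^ (m + 2)‖ / δ :=
    hz.trans (by rw [div_eq_inv_mul]; gcongr)
  refine ⟨s * a, (norm_mul_le _ _).trans (mul_le_one₀ hs (norm_nonneg _) ha), ?_, ?_⟩
  · have has : a * s - a = -(a ^ (m + 2) * y) := by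
      rw [hs_eq, mul_sub, mul_one, ← mul_assoc, ← pow_succ']; abel
    have has_le : ‖a * s‖ ≤ 1 := (norm_mul_le _ _).trans (mul_le_one₀ ha (norm_nonneg _) hs)
    have hpert : ‖(a * s) ^ m - a ^ m‖ ≤ m * (‖a ^ (m + 2)‖ / δ) := by
      refine (norm_pow_sub_pow_le has_le ha m).trans ?_
      rw [has, norm_neg]
      gcongr
      exact hsmall ((norm_mul_le _ _).trans_eq (mul_comm _ _))
    calc ‖(s * a) ^ (m + 1)‖ = ‖s * a ^ (m + 1) + s * ((a * s) ^ m - a ^ m) * a‖ := by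
          rw [pow_succ, ← mul_assoc, mul_pow_mul, pow_succ]; noncomm_ring
      _ ≤ ‖s * a ^ (m + 1)‖ + ‖s‖ * ‖(a * s) ^ m - a ^ m‖ * ‖a‖ :=
          (norm_add_le _ _).trans (add_le_add le_rfl norm_mul₃_le)
      _ ≤ δ + 1 * (m * (‖a ^ (m + 2)‖ / δ)) * 1 := by gcongr
      _ = δ + m * (‖a ^ (m + 2)‖ / δ) := by ring
  · have htrace : φ a - φ (s * a) = φ (y * a ^ (m + 2)) := by
      rw [← map_sub, hs_eq, sub_mul, one_mul, sub_sub_cancel, mul_assoc, htr, mul_assoc,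
        ← pow_succ']
    rw [htrace]
    exact (φ.le_opNorm _).trans (by gcongr; exact hsmall (norm_mul_le _ _))

theorem IsTracial.exists_pos_norm_map_le (htr : IsTracial φ) (m : ℕ) {c : ℝ} (hc : 0 < c) :
    ∃ θ > 0, ∀ a : A, ‖a‖ ≤ 1 → ‖a ^ (m + 1)‖ ≤ θ → ‖φ a‖ ≤ c := by
  induction m generalizing c with
  | zero =>
    refine ⟨c / (‖φ‖ + 1), by positivity, fun a _ ha => ?_⟩
    calc ‖φ a‖ ≤ ‖φ‖ * ‖a‖ := φ.le_opNorm a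
      _ ≤ ‖φ‖ * (c / (‖φ‖ + 1)) := by gcongr; simpa using ha
      _ ≤ c := mul_div_add_one_le (norm_nonneg _) hc.le
  | succ m ih =>
    obtain ⟨θ, hθ, hθφ⟩ := ih (half_pos hc)
    set δ := θ / 2 with hδ
    set κ := min (δ / (m + 1)) (c / 2 / (‖φ‖ + 1))
    refine ⟨δ * κ, by positivity, fun a ha hpow => ?_⟩
    have hκ : ‖a ^ (m + 2)‖ / δ ≤ κ := (div_le_iff₀' (by positivity)).2 hpow
    obtain ⟨x, hx, hxpow, hφx⟩ := htr.exists_norm_map_sub_le ha m (half_pos hθ : 0 < δ)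
    have hxθ : ‖x ^ (m + 1)‖ ≤ θ := by
      calc ‖x ^ (m + 1)‖ ≤ δ + m * κ := hxpow.trans (by gcongr)
        _ ≤ δ + m * (δ / (m + 1)) := by gcongr; exact min_le_left _ _
        _ ≤ θ := by
          rw [mul_div_left_comm]
          linarith [mul_le_of_le_one_right (by positivity : 0 ≤ δ)
            ((div_le_one (by positivity : (0 : ℝ) < m + 1)).2 (by linarith : (m : ℝ) ≤ m + 1))]
    calc ‖φ a‖ ≤ ‖φ x‖ + ‖φ a - φ x‖ := norm_le_norm_add_norm_sub' _ _
      _ ≤ c / 2 + c / 2 := by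
          gcongr
          · exact hθφ x hx hxθ
          · calc ‖φ a - φ x‖ ≤ ‖φ‖ * (c / 2 / (‖φ‖ + 1)) :=
                  hφx.trans <|
                    mul_le_mul_of_nonneg_left (hκ.trans (min_le_right _ _)) (norm_nonneg _)
              _ ≤ c / 2 := mul_div_add_one_le (norm_nonneg _) (half_pos hc).le
      _ = c := add_halves c

theorem IsTracial.map_eq_zero_of_pow_eq_zero (htr : IsTracial φ) {a : A} {n : ℕ} (hn : 0 < n)
    (han : a ^ n = 0) : φ a = 0 := by
  obtain ⟨m, rfl⟩ := Nat.exists_eq_add_one_of_ne_zero hn.ne'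
  set b := (‖a‖ + 1)⁻¹ • a
  have hb : ‖b‖ ≤ 1 := by
    rw [norm_smul, Real.norm_of_nonneg (by positivity), inv_mul_le_one₀ (by positivity)]
    linarith
  have hφb : ‖φ b‖ ≤ 0 := le_of_forall_gt_imp_ge_of_dense fun c hc => by
    obtain ⟨θ, hθ, hθφ⟩ := htr.exists_pos_norm_map_le m hc
    exact hθφ b hb (by rw [smul_pow, han, smul_zero, norm_zero]; exact hθ.le)
  rw [norm_le_zero_iff, φ.map_smul_of_tower, smul_eq_zero] at hφb
  exact hφb.resolve_left (by positivity)

end CStarAlgebra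

theorem stmt18_general {A : Type*} [CStarAlgebra A] [PartialOrder A] [StarOrderedRing A]
    (φ : A →L[ℂ] ℂ)
    (htr : ∀ a b : A, φ (a * b) = φ (b * a)) :
    (∀ a : A, a * a = 0 → φ a = 0) ∧
    (∀ (a : A) (n : ℕ), 0 < n → a ^ n = 0 → φ a = 0) :=
  ⟨fun _ ha => IsTracial.map_eq_zero_of_pow_eq_zero htr two_pos (by rw [sq, ha]),
    fun _ _ => IsTracial.map_eq_zero_of_pow_eq_zero htr⟩

/-- A positive tracial linear functional on a C*-algebra vanishes on every square-zero
element, and more generally on every nilpotent element. -/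
theorem stmt18 {A : Type*} [CStarAlgebra A] [PartialOrder A] [StarOrderedRing A]
    (φ : A →L[ℂ] ℂ)
    (hpos : ∀ x : A, 0 ≤ φ (star x * x))
    (htr : ∀ a b : A, φ (a * b) = φ (b * a)) :
    (∀ a : A, a * a = 0 → φ a = 0) ∧
    (∀ (a : A) (n : ℕ), 0 < n → a ^ n = 0 → φ a = 0) :=
  stmt18_general φ htr
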